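/- arXiv:math/0604552 — 3 statements merged into one kernel-verified Lean document; each statement's English description precedes it below -/
import Mathlib

section
/- Let Δ be the adjacency operator on an SH rooted tree Γ and let H_0 be the closed linear span of {Δ^n δ_O : n ≥ 0}, where δ_O is the delta function at the root. Then H_0 equals the subspace of radially symmetric functions in ℓ²(Γ), i.e., functions f such that f(v) depends only on the distance |v| from the root. -/
/-!
A radial function `f = φ ∘ |·|` is sent by `Δ` to the radial function with profile
`n ↦ κ n φ (n + 1) + φ (n - 1)`, so every `Δ ^ n δ_O` is radial, and the cyclic space lies in the
closed subspace of radial functions. Conversely, the indicators `e n` of the spheres satisfy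
`e 0 = δ_O`, `Δ e 0 = e 1` and `Δ e (n + 1) = κ n e n + e (n + 2)`, so they all lie in the span of
the `Δ ^ n δ_O`; and a radial `ℓ²` function is the limit of its truncations to balls, which are
finite combinations of the `e n`.
-/

open Filter Topology

/-- `level` is the distance to the root and `κ j` the number of children of a vertex at
level `j`. -/
structure IsSphericallyHomogeneous {V : Type*} (G : SimpleGraph V) (level : V → ℕ)
    (κ : ℕ → ℕ) : Prop where
  finite_adj : ∀ v, {u | G.Adj v u}.Finite
  ncard_children : ∀ v, {u | G.Adj v u ∧ level u = level v + 1}.ncard = κ (level v)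
  existsUnique_parent : ∀ v, level v ≠ 0 → ∃! u, G.Adj v u ∧ level u = level v - 1
  adj_level : ∀ u v, G.Adj u v → level u = level v + 1 ∨ level v = level u + 1

namespace IsSphericallyHomogeneous

variable {V : Type*} {G : SimpleGraph V} {level : V → ℕ} {κ : ℕ → ℕ}

theorem finsum_adj_comp_level {M : Type*} [AddCommMonoid M]
    (hG : IsSphericallyHomogeneous G level κ) (φ : ℕ → M) (x : V) :
    ∑ᶠ y ∈ {y | G.Adj x y}, φ (level y) =
      κ (level x) • φ (level x + 1) + if level x = 0 then 0 else φ (level x - 1) := by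
  set C := {y | G.Adj x y ∧ level y = level x + 1}
  set P := {y | G.Adj x y ∧ level x = level y + 1}
  have hCfin : C.Finite := (hG.finite_adj x).subset fun _ hy => hy.1
  have hPfin : P.Finite := (hG.finite_adj x).subset fun _ hy => hy.1
  have hsplit : {y | G.Adj x y} = C ∪ P := by
    ext y
    refine ⟨fun hy => (hG.adj_level x y hy).elim (fun h => .inr ⟨hy, h⟩) fun h => .inl ⟨hy, h⟩,
      fun hy => hy.elim (·.1) (·.1)⟩
  have hdisj : Disjoint C P :=
    Set.disjoint_left.2 fun y hC hP => by have := hC.2; have := hP.2; omega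
  have hC : ∑ᶠ y ∈ C, φ (level y) = κ (level x) • φ (level x + 1) := by
    rw [finsum_mem_congr rfl fun y hy => congrArg φ hy.2,
      finsum_mem_eq_finite_toFinset_sum _ hCfin, Finset.sum_const,
      ← Set.ncard_eq_toFinset_card _ hCfin, hG.ncard_children]
  have hP : ∑ᶠ y ∈ P, φ (level y) = if level x = 0 then 0 else φ (level x - 1) := by
    split_ifs with h0
    · have hPempty : P = ∅ := Set.eq_empty_of_forall_notMem fun y hy => by have := hy.2; omega
      rw [hPempty, finsum_mem_empty]
    · obtain ⟨u, hu, huniq⟩ := hG.existsUnique_parent x h0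
      have hPu : P = {u} := Set.eq_singleton_iff_unique_mem.2
        ⟨⟨hu.1, by omega⟩, fun y hy => huniq y ⟨hy.1, by have := hy.2; omega⟩⟩
      rw [hPu, finsum_mem_singleton, hu.2]
  rw [hsplit, finsum_mem_union hdisj hCfin hPfin, hC, hP]

theorem finite_setOf_level_eq (hG : IsSphericallyHomogeneous G level κ) {O : V}
    (hroot : ∀ v, level v = 0 → v = O) (n : ℕ) : {v | level v = n}.Finite := by
  induction n with
  | zero => exact (Set.finite_singleton O).subset hroot
  | succ n ih =>
    refine (ih.biUnion fun u _ => hG.finite_adj u).subset fun v hv => ?_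
    obtain ⟨u, hu, -⟩ := hG.existsUnique_parent v (by simp_all)
    exact Set.mem_biUnion (show level u = n by simp_all) hu.1.symm

end IsSphericallyHomogeneous

section Span

variable {R M : Type*} [Semiring R] [TopologicalSpace M] [AddCommMonoid M] [Module R M]
  {T : M →L[R] M} {x : M}

theorem span_range_pow_apply_le {S : Submodule R M} (hS : ∀ y ∈ S, T y ∈ S) (hx : x ∈ S) :
    Submodule.span R (Set.range fun n : ℕ => (T ^ n) x) ≤ S := by
  refine Submodule.span_le.2 (Set.range_subset_iff.2 fun n => ?_)
  induction n with
  | zero => simpa using hx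
  | succ n ih => rw [pow_succ']; exact hS _ ih

theorem apply_mem_span_range_pow_apply {y : M}
    (hy : y ∈ Submodule.span R (Set.range fun n : ℕ => (T ^ n) x)) :
    T y ∈ Submodule.span R (Set.range fun n : ℕ => (T ^ n) x) := by
  refine (Submodule.span_le (p := (Submodule.span R _).comap T.toLinearMap)).2
    (Set.range_subset_iff.2 fun n => ?_) hy
  exact Submodule.subset_span ⟨n + 1, by simp only [pow_succ']; rfl⟩

end Span

section Radial

variable {V : Type*} {p : ENNReal} {level : V → ℕ}

variable (level) in
def radialSubmodule : Submodule ℝ (lp (fun _ : V => ℝ) p) where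
  carrier := {f | ∀ u v, level u = level v → f u = f v}
  add_mem' hf hg u v h := by simp only [lp.coeFn_add, Pi.add_apply, hf u v h, hg u v h]
  zero_mem' _ _ _ := rfl
  smul_mem' c f hf u v h := by simp only [lp.coeFn_smul, Pi.smul_apply, hf u v h]

theorem mem_radialSubmodule_iff_exists {f : lp (fun _ : V => ℝ) p} :
    f ∈ radialSubmodule level ↔ ∃ φ : ℕ → ℝ, ∀ v, f v = φ (level v) :=
  ⟨fun hf => ⟨Function.extend level f 0, fun v => (Function.FactorsThrough.extend_apply
      (fun u v h => hf u v h) 0 v).symm⟩,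
    fun ⟨φ, hφ⟩ u v h => by rw [hφ, hφ, h]⟩

variable (level) in
theorem isClosed_radialSubmodule [Fact (1 ≤ p)] :
    IsClosed (radialSubmodule (p := p) level : Set (lp (fun _ : V => ℝ) p)) := by
  have hev (u : V) : Continuous fun f : lp (fun _ : V => ℝ) p => f u :=
    (continuous_apply u).comp lp.uniformContinuous_coe.continuous
  simp only [radialSubmodule, Submodule.coe_set_mk, AddSubmonoid.coe_set_mk,
    AddSubsemigroup.coe_set_mk, Set.ofPred_forall]
  exact isClosed_iInter fun u => isClosed_iInter fun v => isClosed_iInter fun _ =>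
    isClosed_eq (hev u) (hev v)

variable [DecidableEq V]

noncomputable def sphereIndicator (hfin : ∀ n, {v | level v = n}.Finite) (n : ℕ) :
    lp (fun _ : V => ℝ) p :=
  ∑ v ∈ (hfin n).toFinset, lp.single p v 1

variable {hfin : ∀ n, {v | level v = n}.Finite}

theorem sphereIndicator_apply (n : ℕ) (v : V) :
    (sphereIndicator hfin n : lp (fun _ : V => ℝ) p) v = if level v = n then 1 else 0 := by
  rw [sphereIndicator, lp.coeFn_sum, Finset.sum_apply]
  simp [lp.single_apply, Pi.single_apply]

theorem sphereIndicator_mem_radialSubmodule (n : ℕ) :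
    (sphereIndicator hfin n : lp (fun _ : V => ℝ) p) ∈ radialSubmodule level :=
  mem_radialSubmodule_iff_exists.2 ⟨fun m => if m = n then 1 else 0, sphereIndicator_apply n⟩

theorem sphereIndicator_zero {O : V} (hroot : ∀ v, level v = 0 ↔ v = O) :
    sphereIndicator hfin 0 = lp.single p O 1 := by
  ext v
  simp only [sphereIndicator_apply, lp.single_apply, Pi.single_apply, hroot]

theorem radialSubmodule_le_topologicalClosure_span_sphereIndicator [Fact (1 ≤ p)] (hp : p ≠ ⊤) :
    radialSubmodule level ≤
      (Submodule.span ℝ (Set.range (sphereIndicator (p := p) hfin))).topologicalClosure := by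
  intro f hf
  obtain ⟨φ, hφ⟩ := mem_radialSubmodule_iff_exists.1 hf
  let ball (N : ℕ) : Finset V := (Finset.range N).biUnion fun n => (hfin n).toFinset
  have hball : Tendsto ball atTop atTop :=
    tendsto_atTop_finset_of_monotone
      (fun _ _ h => Finset.biUnion_subset_biUnion_of_subset_left _ (Finset.range_mono h))
      fun v => ⟨level v + 1, by simp [ball]⟩
  have htrunc (N : ℕ) : ∑ v ∈ ball N, lp.single p v (f v) =
      ∑ n ∈ Finset.range N, φ n • sphereIndicator hfin n := by
    rw [Finset.sum_biUnion fun a _ b _ hab =>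
      Finset.disjoint_left.2 fun v ha hb => hab (by simp_all)]
    refine Finset.sum_congr rfl fun n _ => ?_
    rw [sphereIndicator, Finset.smul_sum]
    refine Finset.sum_congr rfl fun v hv => ?_
    rw [hφ, (hfin n).mem_toFinset.1 hv, ← lp.single_smul, smul_eq_mul, mul_one]
  rw [← SetLike.mem_coe, Submodule.topologicalClosure_coe]
  refine mem_closure_of_tendsto ((lp.hasSum_single hp f).comp hball)
    (Eventually.of_forall fun N => ?_)
  rw [Function.comp_apply, htrunc]
  exact Submodule.sum_mem _ fun n _ => Submodule.smul_mem _ _ (Submodule.subset_span ⟨n, rfl⟩)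

end Radial

section Adjacency

variable {V : Type*} {G : SimpleGraph V} {level : V → ℕ} {κ : ℕ → ℕ} {p : ENNReal} [Fact (1 ≤ p)]

def IsAdjacencyOperator (G : SimpleGraph V)
    (Δ : lp (fun _ : V => ℝ) p →L[ℝ] lp (fun _ : V => ℝ) p) : Prop :=
  ∀ (f : lp (fun _ : V => ℝ) p) (x : V), Δ f x = ∑ᶠ y ∈ {y | G.Adj x y}, f y

variable {Δ : lp (fun _ : V => ℝ) p →L[ℝ] lp (fun _ : V => ℝ) p}

theorem adjacency_apply_of_eq_comp (hG : IsSphericallyHomogeneous G level κ)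
    (hΔ : IsAdjacencyOperator G Δ) {f : lp (fun _ : V => ℝ) p} {φ : ℕ → ℝ}
    (hf : ∀ v, f v = φ (level v)) (x : V) :
    Δ f x = κ (level x) * φ (level x + 1) + if level x = 0 then 0 else φ (level x - 1) := by
  rw [hΔ, finsum_mem_congr rfl fun y _ => hf y, hG.finsum_adj_comp_level, nsmul_eq_mul]

theorem adjacency_mem_radialSubmodule (hG : IsSphericallyHomogeneous G level κ)
    (hΔ : IsAdjacencyOperator G Δ) {f : lp (fun _ : V => ℝ) p} (hf : f ∈ radialSubmodule level) :
    Δ f ∈ radialSubmodule level := by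
  obtain ⟨φ, hφ⟩ := mem_radialSubmodule_iff_exists.1 hf
  exact mem_radialSubmodule_iff_exists.2
    ⟨fun n => κ n * φ (n + 1) + if n = 0 then 0 else φ (n - 1),
      adjacency_apply_of_eq_comp hG hΔ hφ⟩

variable [DecidableEq V] {hfin : ∀ n, {v | level v = n}.Finite}

theorem adjacency_sphereIndicator_zero (hG : IsSphericallyHomogeneous G level κ)
    (hΔ : IsAdjacencyOperator G Δ) :
    Δ (sphereIndicator hfin 0) = sphereIndicator hfin 1 := by
  ext x
  rw [adjacency_apply_of_eq_comp hG hΔ (φ := fun m => if m = 0 then 1 else 0)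
    (sphereIndicator_apply 0), sphereIndicator_apply]
  rcases level x with _ | _ | m <;> simp

theorem adjacency_sphereIndicator_succ (hG : IsSphericallyHomogeneous G level κ)
    (hΔ : IsAdjacencyOperator G Δ) (n : ℕ) :
    Δ (sphereIndicator hfin (n + 1)) =
      (κ n : ℝ) • sphereIndicator hfin n + sphereIndicator hfin (n + 2) := by
  ext x
  rw [adjacency_apply_of_eq_comp hG hΔ (φ := fun m => if m = n + 1 then 1 else 0)
    (sphereIndicator_apply (n + 1)), lp.coeFn_add, Pi.add_apply,
    lp.coeFn_smul, Pi.smul_apply, sphereIndicator_apply, sphereIndicator_apply, smul_eq_mul]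
  rcases level x with _ | m <;> simp only [Nat.add_right_cancel_iff] <;> split_ifs <;> simp_all

theorem sphereIndicator_mem_of_adjacency_invariant (hG : IsSphericallyHomogeneous G level κ)
    (hΔ : IsAdjacencyOperator G Δ) {S : Submodule ℝ (lp (fun _ : V => ℝ) p)} (hS : ∀ f ∈ S, Δ f ∈ S)
    (h0 : sphereIndicator hfin 0 ∈ S) (n : ℕ) : sphereIndicator hfin n ∈ S := by
  induction n using Nat.twoStepInduction with
  | zero => exact h0
  | one => exact adjacency_sphereIndicator_zero hG hΔ ▸ hS _ h0
  | more n hn hn1 =>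
    rw [eq_sub_of_add_eq' (adjacency_sphereIndicator_succ hG hΔ n).symm]
    exact S.sub_mem (hS _ hn1) (S.smul_mem _ hn)

end Adjacency

theorem cyclic_space_of_root_eq_radial_general
    (V : Type*) [DecidableEq V] (G : SimpleGraph V) (O : V) (κ : ℕ → ℕ)
    (distO : V → ℕ) (hdist : ∀ v, distO v = G.dist O v) (hconn : G.Connected)
    (hnbrfin : ∀ v : V, {u | G.Adj v u}.Finite)
    (hchild : ∀ v : V, {u | G.Adj v u ∧ distO u = distO v + 1}.ncard = κ (distO v))
    (hparent : ∀ v : V, distO v ≠ 0 → ∃! u : V, G.Adj v u ∧ distO u = distO v - 1)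
    (hadj : ∀ u v : V, G.Adj u v → distO u = distO v + 1 ∨ distO v = distO u + 1)
    (Δ : lp (fun _ : V => ℝ) 2 →L[ℝ] lp (fun _ : V => ℝ) 2)
    (hΔ : ∀ (f : lp (fun _ : V => ℝ) 2) (x : V),
      (Δ f) x = ∑ᶠ y ∈ {y | G.Adj x y}, f y) :
    ((Submodule.span ℝ
        (Set.range fun n : ℕ => (Δ ^ n) (lp.single 2 O (1 : ℝ)))).topologicalClosure
        : Set (lp (fun _ : V => ℝ) 2)) =
      {f : lp (fun _ : V => ℝ) 2 | ∀ u v : V, distO u = distO v → f u = f v} := by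
  have hG : IsSphericallyHomogeneous G distO κ := ⟨hnbrfin, hchild, hparent, hadj⟩
  have hroot (v : V) : distO v = 0 ↔ v = O := by rw [hdist, hconn.dist_eq_zero_iff, eq_comm]
  have hfin := hG.finite_setOf_level_eq fun v => (hroot v).1
  have hδ : lp.single 2 O 1 = sphereIndicator hfin 0 := (sphereIndicator_zero hroot).symm
  set S := Submodule.span ℝ (Set.range fun n : ℕ => (Δ ^ n) (lp.single 2 O (1 : ℝ)))
  have hS_le : S ≤ radialSubmodule distO :=
    span_range_pow_apply_le (fun _ => adjacency_mem_radialSubmodule hG hΔ)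
      (hδ ▸ sphereIndicator_mem_radialSubmodule 0)
  have hsphere_le : Submodule.span ℝ (Set.range (sphereIndicator hfin)) ≤ S :=
    Submodule.span_le.2 <| Set.range_subset_iff.2 <|
      sphereIndicator_mem_of_adjacency_invariant hG hΔ
        (fun _ => apply_mem_span_range_pow_apply) (hδ ▸ Submodule.subset_span ⟨0, by simp⟩)
  suffices S.topologicalClosure = radialSubmodule distO from congrArg SetLike.coe this
  refine le_antisymm ?_ ?_
  · exact S.topologicalClosure_minimal hS_le (isClosed_radialSubmodule distO)
  · exact (radialSubmodule_le_topologicalClosure_span_sphereIndicator (p := 2)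
      ENNReal.ofNat_ne_top).trans (Submodule.topologicalClosure_mono hsphere_le)

/-- For the adjacency operator `Δ` of a spherically homogeneous
rooted tree (bounded branching), the closed linear span of `{Δ^n δ_O : n ≥ 0}`
is exactly the subspace of radially symmetric `ℓ²` functions. -/
theorem cyclic_space_of_root_eq_radial
    (V : Type*) [DecidableEq V] (G : SimpleGraph V) (O : V) (κ : ℕ → ℕ) (hκpos : ∀ j, 0 < κ j)
    (K : ℕ) (hκK : ∀ j, κ j ≤ K)
    (distO : V → ℕ) (hdist : ∀ v, distO v = G.dist O v) (hconn : G.Connected)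
    (hnbrfin : ∀ v : V, {u | G.Adj v u}.Finite)
    (hchild : ∀ v : V, {u | G.Adj v u ∧ distO u = distO v + 1}.ncard = κ (distO v))
    (hparent : ∀ v : V, distO v ≠ 0 → ∃! u : V, G.Adj v u ∧ distO u = distO v - 1)
    (hadj : ∀ u v : V, G.Adj u v → distO u = distO v + 1 ∨ distO v = distO u + 1)
    (Δ : lp (fun _ : V => ℝ) 2 →L[ℝ] lp (fun _ : V => ℝ) 2)
    (hΔ : ∀ (f : lp (fun _ : V => ℝ) 2) (x : V),
      (Δ f) x = ∑ᶠ y ∈ {y | G.Adj x y}, f y) :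
    ((Submodule.span ℝ
        (Set.range fun n : ℕ => (Δ ^ n) (lp.single 2 O (1 : ℝ)))).topologicalClosure
        : Set (lp (fun _ : V => ℝ) 2)) =
      {f : lp (fun _ : V => ℝ) 2 | ∀ u v : V, distO u = distO v → f u = f v} :=
  cyclic_space_of_root_eq_radial_general V G O κ distO hdist hconn hnbrfin hchild hparent hadj Δ hΔ
end

section
/- Let Γ be an SH rooted tree with bounded branching and Δ its adjacency operator. If φ ∈ ℓ²(Γ) is supported on the sphere S_Γ(R) and satisfies that for every vertex w ∈ S_Γ(R−1), the sum of φ over the children of w is zero, then every vector Δ^n φ is orthogonal to every radially symmetric function in ℓ²(Γ). -/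
/-! Write `σ_r f` for the sum of `f` over the sphere `S(r)`. Since every vertex of `S(r+1)` has
exactly one neighbour in `S(r)` and every vertex of `S(r)` exactly `κ_r` neighbours in `S(r+1)`,
double counting gives `σ_r (Δ f) = κ_{r-1} σ_{r-1} f + σ_{r+1} f` (without the first term for
`r = 0`). The hypotheses on `φ` make every `σ_r φ` vanish, hence all `σ_r (Δ^n φ)` vanish,
and the inner product of `Δ^n φ` with a radial `g` is the sum over `r` of `g|_{S(r)} · σ_r (Δ^n φ)`.
-/

open Finset

namespace SimpleGraph

variable {V : Type*} (G : SimpleGraph V) [G.LocallyFinite] {level : V → ℕ} {S : ℕ → Finset V}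
  {M : Type*} [AddCommMonoid M]

theorem sum_sphere_sum_neighbor_comm (hS : ∀ r v, v ∈ S r ↔ level v = r) (r s : ℕ)
    (F : V → V → M) :
    ∑ x ∈ S r, ∑ y ∈ (G.neighborFinset x).filter (level · = s), F x y =
      ∑ y ∈ S s, ∑ x ∈ (G.neighborFinset y).filter (level · = r), F x y :=
  Finset.sum_comm' fun x y => by
    simp only [mem_filter, mem_neighborFinset, hS, G.adj_comm x y]
    tauto

theorem card_filter_neighborFinset_level_eq_one
    (hparent : ∀ v, level v ≠ 0 → ∃! u, G.Adj v u ∧ level u = level v - 1) {y : V} {r : ℕ}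
    (hy : level y = r + 1) : #((G.neighborFinset y).filter (level · = r)) = 1 := by
  obtain ⟨p, hp, hp_unique⟩ := hparent y (by omega)
  rw [card_eq_one]
  refine ⟨p, eq_singleton_iff_unique_mem.mpr ⟨?_, fun u hu => ?_⟩⟩
  · simpa [hy] using hp
  · simp only [mem_filter, mem_neighborFinset] at hu
    exact hp_unique u ⟨hu.1, by omega⟩

theorem sum_sphere_succ_eq_sum_sum_children (hS : ∀ r v, v ∈ S r ↔ level v = r)
    (hparent : ∀ v, level v ≠ 0 → ∃! u, G.Adj v u ∧ level u = level v - 1) (r : ℕ) (f : V → M) :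
    ∑ y ∈ S (r + 1), f y =
      ∑ x ∈ S r, ∑ y ∈ (G.neighborFinset x).filter (level · = r + 1), f y := by
  rw [G.sum_sphere_sum_neighbor_comm hS]
  refine sum_congr rfl fun y hy => ?_
  rw [sum_const, G.card_filter_neighborFinset_level_eq_one hparent ((hS _ _).mp hy), one_smul]

theorem sum_sphere_succ_sum_parents (hS : ∀ r v, v ∈ S r ↔ level v = r) (κ : ℕ → ℕ)
    (hchild : ∀ x, #((G.neighborFinset x).filter (level · = level x + 1)) = κ (level x))
    (r : ℕ) (f : V → M) :
    ∑ x ∈ S (r + 1), ∑ y ∈ (G.neighborFinset x).filter (level · = r), f y =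
      κ r • ∑ y ∈ S r, f y := by
  rw [G.sum_sphere_sum_neighbor_comm hS, smul_sum]
  refine sum_congr rfl fun y hy => ?_
  rw [sum_const, ← (hS _ _).mp hy, hchild]

theorem coe_filter_neighborFinset (w : V) (p : V → Prop) [DecidablePred p] :
    (((G.neighborFinset w).filter p : Finset V) : Set V) = {v | G.Adj w v ∧ p v} := by
  ext
  simp

theorem sum_neighborFinset_eq_children_add_parents
    (hadj : ∀ u v, G.Adj u v → level u = level v + 1 ∨ level v = level u + 1) (x : V)
    (f : V → M) :
    ∑ y ∈ G.neighborFinset x, f y =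
      ∑ y ∈ (G.neighborFinset x).filter (level · = level x + 1), f y +
        ∑ y ∈ (G.neighborFinset x).filter (level · + 1 = level x), f y := by
  rw [← sum_filter_add_sum_filter_not _ (level · = level x + 1)]
  congr 2
  refine filter_congr fun y hy => ?_
  rcases hadj x y ((G.mem_neighborFinset x y).mp hy) with h | h <;> omega

theorem sum_sphere_sum_neighbor_eq_zero (hS : ∀ r v, v ∈ S r ↔ level v = r)
    (hadj : ∀ u v, G.Adj u v → level u = level v + 1 ∨ level v = level u + 1)
    (hparent : ∀ v, level v ≠ 0 → ∃! u, G.Adj v u ∧ level u = level v - 1) (κ : ℕ → ℕ)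
    (hchild : ∀ x, #((G.neighborFinset x).filter (level · = level x + 1)) = κ (level x))
    {f : V → M} (hf : ∀ r, ∑ v ∈ S r, f v = 0) (r : ℕ) :
    ∑ x ∈ S r, ∑ y ∈ G.neighborFinset x, f y = 0 := by
  have hlevel : ∀ x ∈ S r, level x = r := fun x hx => (hS _ _).mp hx
  have hchildren :
      ∑ x ∈ S r, ∑ y ∈ (G.neighborFinset x).filter (level · = level x + 1), f y = 0 := by
    rw [sum_congr rfl fun x hx => by rw [hlevel x hx],
      ← G.sum_sphere_succ_eq_sum_sum_children hS hparent, hf]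
  have hparents :
      ∑ x ∈ S r, ∑ y ∈ (G.neighborFinset x).filter (level · + 1 = level x), f y = 0 := by
    cases r with
    | zero => exact sum_eq_zero fun x hx => by simp [hlevel x hx]
    | succ s =>
      have hfilter : ∀ x ∈ S (s + 1), (G.neighborFinset x).filter (level · + 1 = level x) =
          (G.neighborFinset x).filter (level · = s) := fun x hx =>
        filter_congr fun y _ => by rw [hlevel x hx]; omega
      rw [sum_congr rfl fun x hx => by rw [hfilter x hx], G.sum_sphere_succ_sum_parents hS κ hchild,
        hf, smul_zero]
  simp_rw [G.sum_neighborFinset_eq_children_add_parents hadj, sum_add_distrib, hchildren,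
    hparents, add_zero]

theorem sum_sphere_eq_zero_of_sum_children_eq_zero (hS : ∀ r v, v ∈ S r ↔ level v = r)
    (hparent : ∀ v, level v ≠ 0 → ∃! u, G.Adj v u ∧ level u = level v - 1) {R : ℕ} (hR : R ≠ 0)
    {f : V → M} (hsupp : ∀ v, level v ≠ R → f v = 0)
    (hsum : ∀ w, level w = R - 1 → ∑ v ∈ (G.neighborFinset w).filter (level · = R), f v = 0)
    (r : ℕ) : ∑ v ∈ S r, f v = 0 := by
  by_cases hr : r = R
  · obtain ⟨s, rfl⟩ := Nat.exists_eq_succ_of_ne_zero hR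
    rw [hr, G.sum_sphere_succ_eq_sum_sum_children hS hparent]
    exact sum_eq_zero fun w hw => hsum w (by simp [(hS _ _).mp hw])
  · exact sum_eq_zero fun v hv => hsupp v (by rwa [(hS _ _).mp hv])

theorem finite_setOf_level_eq (h0 : {v | level v = 0}.Finite)
    (hparent : ∀ v, level v ≠ 0 → ∃ u, G.Adj v u ∧ level u = level v - 1) (r : ℕ) :
    {v | level v = r}.Finite := by
  induction r with
  | zero => exact h0
  | succ r ih =>
    refine (ih.biUnion fun w _ => (G.neighborSet w).toFinite).subset fun v hv => ?_
    obtain ⟨u, hvu, hu⟩ := hparent v (by simp_all)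
    exact Set.mem_biUnion (x := u) (by simp_all) hvu.symm

end SimpleGraph

theorem lp.inner_eq_zero_of_sum_sphere_eq_zero {V : Type*} {level : V → ℕ} {S : ℕ → Finset V}
    (hS : ∀ r v, v ∈ S r ↔ level v = r) (f g : lp (fun _ : V => ℝ) 2)
    (hf : ∀ r, ∑ v ∈ S r, f v = 0) (hg : ∀ u v, level u = level v → g u = g v) :
    inner ℝ f g = 0 := by
  have hsum : HasSum (fun v => f v * g v) (inner ℝ f g) := by
    rw [lp.inner_eq_tsum]
    simpa [Real.inner_apply, mul_comm] using (lp.summable_inner (𝕜 := ℝ) f g).hasSum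
  have hfiber : ∀ r, ∑' v : level ⁻¹' {r}, f v * g v = 0 := by
    intro r
    have hsphere : level ⁻¹' {r} = ↑(S r) := by ext; simp [hS]
    rw [hsphere, Finset.tsum_subtype' (S r) fun v => f v * g v]
    obtain hempty | ⟨v₀, hv₀⟩ := (S r).eq_empty_or_nonempty
    · simp [hempty]
    · rw [sum_congr rfl fun v hv => by rw [hg v v₀ (by rw [(hS _ _).mp hv, (hS _ _).mp hv₀])],
        ← sum_mul, hf, zero_mul]
  refine (hsum.tsum_fiberwise level).unique ?_
  simp only [hfiber]
  exact hasSum_zero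

theorem powers_orthogonal_to_radial_general
    (V : Type*) (G : SimpleGraph V) (O : V)
    (κ : ℕ → ℕ)
    (distO : V → ℕ) (hdist : ∀ v, distO v = G.dist O v) (hconn : G.Connected)
    (hnbrfin : ∀ v : V, {u | G.Adj v u}.Finite)
    (hchild : ∀ v : V, {u | G.Adj v u ∧ distO u = distO v + 1}.ncard = κ (distO v))
    (hparent : ∀ v : V, distO v ≠ 0 → ∃! u : V, G.Adj v u ∧ distO u = distO v - 1)
    (hadj : ∀ u v : V, G.Adj u v → distO u = distO v + 1 ∨ distO v = distO u + 1)
    (Δ : lp (fun _ : V => ℝ) 2 →L[ℝ] lp (fun _ : V => ℝ) 2)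
    (hΔ : ∀ (f : lp (fun _ : V => ℝ) 2) (x : V),
      (Δ f) x = ∑ᶠ y ∈ {y | G.Adj x y}, f y)
    (R : ℕ) (hR : 1 ≤ R)
    (φ : lp (fun _ : V => ℝ) 2)
    (hsupp : ∀ v : V, distO v ≠ R → φ v = 0)
    (hsum : ∀ w : V, distO w = R - 1 →
      ∑ᶠ v ∈ {v | G.Adj w v ∧ distO v = R}, φ v = 0) :
    ∀ (n : ℕ) (g : lp (fun _ : V => ℝ) 2),
      (∀ u v : V, distO u = distO v → g u = g v) →
      (inner ℝ ((Δ ^ n) φ) g : ℝ) = 0 := by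
  intro n g hg
  let _ : G.LocallyFinite := fun v => (hnbrfin v).fintype
  have hroot : {v | distO v = 0}.Finite := by
    refine (Set.finite_singleton O).subset fun v (hv : distO v = 0) => ?_
    rw [hdist, hconn.dist_eq_zero_iff] at hv
    exact hv.symm
  have hfin := G.finite_setOf_level_eq hroot fun v hv => (hparent v hv).exists
  have hS : ∀ r v, v ∈ (hfin r).toFinset ↔ distO v = r := fun r v => (hfin r).mem_toFinset
  have hchild' : ∀ x, #((G.neighborFinset x).filter (distO · = distO x + 1)) = κ (distO x) :=
    fun x => by rw [← hchild x, ← G.coe_filter_neighborFinset, Set.ncard_coe_finset]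
  have hΔ' : ∀ f x, Δ f x = ∑ y ∈ G.neighborFinset x, f y := fun f x => by
    rw [hΔ, ← finsum_mem_coe_finset, SimpleGraph.coe_neighborFinset]
    rfl
  have hφ := G.sum_sphere_eq_zero_of_sum_children_eq_zero hS hparent (by omega) hsupp
    fun w hw => by rw [← hsum w hw, ← finsum_mem_coe_finset, G.coe_filter_neighborFinset]
  have hpow : ∀ n r, ∑ v ∈ (hfin r).toFinset, (Δ ^ n) φ v = 0 := by
    intro n
    induction n with
    | zero => simpa using hφ
    | succ n ih =>
      intro r
      simp only [pow_succ', mul_apply_eq_comp, hΔ']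
      exact G.sum_sphere_sum_neighbor_eq_zero hS hadj hparent κ hchild' ih r
  exact lp.inner_eq_zero_of_sum_sphere_eq_zero hS _ g (hpow n) hg

/-- If `φ ∈ ℓ²(Γ)` is supported on the sphere of radius `R` of
an SH rooted tree and its sum over the children of each vertex of the sphere of
radius `R-1` vanishes, then every `Δ^n φ` is orthogonal to every radially
symmetric `ℓ²` function. -/
theorem powers_orthogonal_to_radial
    (V : Type*) (G : SimpleGraph V) (O : V)
    (κ : ℕ → ℕ) (hκpos : ∀ j, 0 < κ j) (K : ℕ) (hκK : ∀ j, κ j ≤ K)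
    (distO : V → ℕ) (hdist : ∀ v, distO v = G.dist O v) (hconn : G.Connected)
    (hnbrfin : ∀ v : V, {u | G.Adj v u}.Finite)
    (hchild : ∀ v : V, {u | G.Adj v u ∧ distO u = distO v + 1}.ncard = κ (distO v))
    (hparent : ∀ v : V, distO v ≠ 0 → ∃! u : V, G.Adj v u ∧ distO u = distO v - 1)
    (hadj : ∀ u v : V, G.Adj u v → distO u = distO v + 1 ∨ distO v = distO u + 1)
    (Δ : lp (fun _ : V => ℝ) 2 →L[ℝ] lp (fun _ : V => ℝ) 2)
    (hΔ : ∀ (f : lp (fun _ : V => ℝ) 2) (x : V),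
      (Δ f) x = ∑ᶠ y ∈ {y | G.Adj x y}, f y)
    (R : ℕ) (hR : 1 ≤ R)
    (φ : lp (fun _ : V => ℝ) 2)
    (hsupp : ∀ v : V, distO v ≠ R → φ v = 0)
    (hsum : ∀ w : V, distO w = R - 1 →
      ∑ᶠ v ∈ {v | G.Adj w v ∧ distO v = R}, φ v = 0) :
    ∀ (n : ℕ) (g : lp (fun _ : V => ℝ) 2),
      (∀ u v : V, distO u = distO v → g u = g v) →
      (inner ℝ ((Δ ^ n) φ) g : ℝ) = 0 :=
  powers_orthogonal_to_radial_general V G O κ distO hdist hconn hnbrfin hchild hparent hadj Δ hΔ R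
    hR φ hsupp hsum
end

section
/- Let J₁ be a bounded Jacobi matrix and J₂ the once-stripped Jacobi matrix (first row and column deleted), with m-functions m₁, m₂ related by m₁(z) = 1/(b(1) − z − a(1)² m₂(z)). Then for Lebesgue-a.e. x ∈ ℝ, lim_{ε↓0} |m₁(x+iε)| = ∞ if and only if m₂(x+iε) → (b(1) − x)/a(1)² ∈ ℝ as ε↓0. Consequently, the sets {x : lim_{ε↓0}|m₁(x+iε)| = ∞} and {x : lim_{ε↓0}|m₂(x+iε)| = ∞} are disjoint; hence the singular parts of the spectral measures μ₁ and μ₂ are mutually singular whenever each singular part is supported on the set where its own m-function tends to ∞. -/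
open MeasureTheory Filter Topology Complex

/-!
With `D(z) = b - z - a² m₂(z)` we have `m₁ = D⁻¹`, and `Im m₂ ≥ 0` gives `Im D < 0` on the
upper half-plane, so `D` never vanishes there. Hence, for every `x`, `|m₁(x + iε)| → ∞` iff
`D(x + iε) → 0` iff `m₂(x + iε) → (b - x)/a²`. A finite limit of `m₂` excludes `|m₂| → ∞`, so
the divergence sets are disjoint, and measures concentrated on them are mutually singular.
-/

theorem im_integral_inv_sub_nonneg (μ : Measure ℝ) {z : ℂ} (hz : 0 < z.im) :
    0 ≤ (∫ x : ℝ, ((x : ℂ) - z)⁻¹ ∂μ).im := by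
  by_cases hint : Integrable (fun x : ℝ => ((x : ℂ) - z)⁻¹) μ
  · rw [← RCLike.im_to_complex, ← integral_im hint]
    refine integral_nonneg fun x => ?_
    simp only [RCLike.im_to_complex, inv_im, sub_im, ofReal_im, zero_sub, neg_neg]
    exact div_nonneg hz.le (normSq_nonneg _)
  · simp [integral_undef hint]

theorem tendsto_norm_inv_atTop_iff {α 𝕜 : Type*} [NormedDivisionRing 𝕜] {l : Filter α}
    {f : α → 𝕜} (hf : ∀ᶠ t in l, f t ≠ 0) :
    Tendsto (fun t => ‖(f t)⁻¹‖) l atTop ↔ Tendsto f l (𝓝 0) := by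
  refine ⟨fun h => ?_, fun h => ?_⟩
  · simpa [Function.comp_def] using
      tendsto_inv₀_cobounded.comp (tendsto_norm_atTop_iff_cobounded.mp h)
  · exact tendsto_norm_inv_nhdsNE_zero_atTop.comp (tendsto_nhdsWithin_iff.mpr ⟨h, hf⟩)

theorem tendsto_sub_mul_nhds_zero_iff {α 𝕜 : Type*} [NormedField 𝕜] {l : Filter α}
    {u h : α → 𝕜} {c k : 𝕜} (hu : Tendsto u l (𝓝 c)) (hk : k ≠ 0) :
    Tendsto (fun t => u t - k * h t) l (𝓝 0) ↔ Tendsto h l (𝓝 (c / k)) := by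
  refine ⟨fun hD => ?_, fun hh => ?_⟩
  · have := (hu.sub hD).div_const k
    rw [sub_zero] at this
    exact this.congr fun t => by field_simp; ring
  · simpa [mul_div_cancel₀ c hk] using hu.sub (hh.const_mul k)

theorem im_sub_sub_mul_neg {a b : ℝ} {w z : ℂ} (hz : 0 < z.im) (hw : 0 ≤ w.im) :
    ((b : ℂ) - z - (a : ℂ) ^ 2 * w).im < 0 := by
  have : ((b : ℂ) - z - (a : ℂ) ^ 2 * w).im = -z.im - a ^ 2 * w.im := by
    simp [← ofReal_pow]
  rw [this]
  linarith [mul_nonneg (sq_nonneg a) hw]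

theorem tendsto_vertical_norm_atTop_iff {m₁ m₂ : ℂ → ℂ} {a b : ℝ} (ha : a ≠ 0)
    (him : ∀ z : ℂ, 0 < z.im → 0 ≤ (m₂ z).im)
    (hrel : ∀ z : ℂ, 0 < z.im → m₁ z = ((b : ℂ) - z - (a : ℂ) ^ 2 * m₂ z)⁻¹) (x : ℝ) :
    Tendsto (fun ε : ℝ => ‖m₁ ((x : ℂ) + ε * I)‖) (𝓝[>] 0) atTop ↔
      Tendsto (fun ε : ℝ => m₂ ((x : ℂ) + ε * I)) (𝓝[>] 0) (𝓝 (((b - x) / a ^ 2 : ℝ) : ℂ)) := by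
  have hpos : ∀ᶠ ε : ℝ in 𝓝[>] 0, 0 < ((x : ℂ) + ε * I).im := by
    filter_upwards [self_mem_nhdsWithin] with ε hε
    simpa using hε
  have hvert : Tendsto (fun ε : ℝ => (x : ℂ) + ε * I) (𝓝[>] 0) (𝓝 x) := by
    have : Continuous fun ε : ℝ => (x : ℂ) + ε * I := by fun_prop
    simpa using (this.tendsto 0).mono_left nhdsWithin_le_nhds
  have hD : ∀ᶠ ε : ℝ in 𝓝[>] 0,
      (b : ℂ) - ((x : ℂ) + ε * I) - (a : ℂ) ^ 2 * m₂ ((x : ℂ) + ε * I) ≠ 0 :=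
    hpos.mono fun ε hε h => (im_sub_sub_mul_neg hε (him _ hε)).ne (by rw [h, zero_im])
  calc _ ↔ Tendsto (fun ε : ℝ =>
          ‖((b : ℂ) - ((x : ℂ) + ε * I) - (a : ℂ) ^ 2 * m₂ ((x : ℂ) + ε * I))⁻¹‖)
          (𝓝[>] 0) atTop :=
        tendsto_congr' (hpos.mono fun ε hε => by rw [hrel _ hε])
    _ ↔ _ := tendsto_norm_inv_atTop_iff hD
    _ ↔ _ := by
      rw [tendsto_sub_mul_nhds_zero_iff (tendsto_const_nhds.sub hvert)
        (by exact_mod_cast pow_ne_zero 2 ha)]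
      push_cast
      rfl

theorem disjoint_setOf_tendsto_norm_atTop {m₁ m₂ : ℂ → ℂ} {a b : ℝ} (ha : a ≠ 0)
    (him : ∀ z : ℂ, 0 < z.im → 0 ≤ (m₂ z).im)
    (hrel : ∀ z : ℂ, 0 < z.im → m₁ z = ((b : ℂ) - z - (a : ℂ) ^ 2 * m₂ z)⁻¹) :
    Disjoint
      {x : ℝ | Tendsto (fun ε : ℝ => ‖m₁ ((x : ℂ) + ε * I)‖) (𝓝[>] 0) atTop}
      {x : ℝ | Tendsto (fun ε : ℝ => ‖m₂ ((x : ℂ) + ε * I)‖) (𝓝[>] 0) atTop} :=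
  Set.disjoint_left.mpr fun x h₁ h₂ =>
    ((tendsto_vertical_norm_atTop_iff ha him hrel x).mp h₁).norm.not_tendsto
      (disjoint_nhds_atTop _) h₂

theorem stripped_m_functions_singular_parts_mutually_singular_general
    (a b : ℝ) (ha : 0 < a)
    (μ₂ : Measure ℝ)
    (m₁ m₂ : ℂ → ℂ)
    (hm₂ : ∀ z : ℂ, 0 < z.im → m₂ z = ∫ x : ℝ, ((x : ℂ) - z)⁻¹ ∂μ₂)
    (hrel : ∀ z : ℂ, 0 < z.im →
      m₁ z = ((b : ℂ) - z - (a : ℂ) ^ 2 * m₂ z)⁻¹)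
    -- the singular parts of `μ₁`, `μ₂`, supported on the divergence sets of
    -- their `m`-functions
    (ν₁ ν₂ : Measure ℝ)
    (hν₁supp : ν₁ {x : ℝ | ¬ Tendsto (fun ε : ℝ => ‖m₁ ((x : ℂ) + ε * I)‖)
      (𝓝[>] 0) atTop} = 0)
    (hν₂supp : ν₂ {x : ℝ | ¬ Tendsto (fun ε : ℝ => ‖m₂ ((x : ℂ) + ε * I)‖)
      (𝓝[>] 0) atTop} = 0) :
    (∀ᵐ x : ℝ,
      (Tendsto (fun ε : ℝ => ‖m₁ ((x : ℂ) + ε * I)‖) (𝓝[>] 0) atTop ↔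
        Tendsto (fun ε : ℝ => m₂ ((x : ℂ) + ε * I)) (𝓝[>] 0)
          (𝓝 (((b - x) / a ^ 2 : ℝ) : ℂ)))) ∧
    Disjoint
      {x : ℝ | Tendsto (fun ε : ℝ => ‖m₁ ((x : ℂ) + ε * I)‖) (𝓝[>] 0) atTop}
      {x : ℝ | Tendsto (fun ε : ℝ => ‖m₂ ((x : ℂ) + ε * I)‖) (𝓝[>] 0) atTop} ∧
    ν₁ ⟂ₘ ν₂ := by
  have him : ∀ z : ℂ, 0 < z.im → 0 ≤ (m₂ z).im := fun z hz => by
    rw [hm₂ z hz]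
    exact im_integral_inv_sub_nonneg μ₂ hz
  have hdisj := disjoint_setOf_tendsto_norm_atTop ha.ne' him hrel
  refine ⟨ae_of_all _ (tendsto_vertical_norm_atTop_iff ha.ne' him hrel), hdisj, ?_⟩
  exact .mk hν₁supp hν₂supp fun x _ =>
    or_iff_not_imp_left.mpr fun h₁ => Set.disjoint_left.mp hdisj (not_not.mp h₁)

/-- If the `m`-functions of a Jacobi matrix and of its
once-stripped matrix are related by `m₁(z) = 1/(b - z - a² m₂(z))`, then for
Lebesgue-a.e. `x`, `|m₁(x+iε)| → ∞` iff `m₂(x+iε) → (b - x)/a²`; the divergence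
sets of `m₁` and `m₂` are disjoint; and consequently the singular parts of the
two spectral measures (each being supported on the divergence set of its own
`m`-function) are mutually singular. -/
theorem stripped_m_functions_singular_parts_mutually_singular
    (a b : ℝ) (ha : 0 < a)
    (μ₁ μ₂ : Measure ℝ) [IsFiniteMeasure μ₁] [IsFiniteMeasure μ₂]
    (m₁ m₂ : ℂ → ℂ)
    (hm₁ : ∀ z : ℂ, 0 < z.im → m₁ z = ∫ x : ℝ, ((x : ℂ) - z)⁻¹ ∂μ₁)
    (hm₂ : ∀ z : ℂ, 0 < z.im → m₂ z = ∫ x : ℝ, ((x : ℂ) - z)⁻¹ ∂μ₂)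
    (hrel : ∀ z : ℂ, 0 < z.im →
      m₁ z = ((b : ℂ) - z - (a : ℂ) ^ 2 * m₂ z)⁻¹)
    -- the singular parts of `μ₁`, `μ₂`, supported on the divergence sets of
    -- their `m`-functions
    (ν₁ ν₂ : Measure ℝ)
    (hν₁ : ν₁ ≤ μ₁) (hν₂ : ν₂ ≤ μ₂)
    (hν₁supp : ν₁ {x : ℝ | ¬ Tendsto (fun ε : ℝ => ‖m₁ ((x : ℂ) + ε * I)‖)
      (𝓝[>] 0) atTop} = 0)
    (hν₂supp : ν₂ {x : ℝ | ¬ Tendsto (fun ε : ℝ => ‖m₂ ((x : ℂ) + ε * I)‖)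
      (𝓝[>] 0) atTop} = 0) :
    (∀ᵐ x : ℝ,
      (Tendsto (fun ε : ℝ => ‖m₁ ((x : ℂ) + ε * I)‖) (𝓝[>] 0) atTop ↔
        Tendsto (fun ε : ℝ => m₂ ((x : ℂ) + ε * I)) (𝓝[>] 0)
          (𝓝 (((b - x) / a ^ 2 : ℝ) : ℂ)))) ∧
    Disjoint
      {x : ℝ | Tendsto (fun ε : ℝ => ‖m₁ ((x : ℂ) + ε * I)‖) (𝓝[>] 0) atTop}
      {x : ℝ | Tendsto (fun ε : ℝ => ‖m₂ ((x : ℂ) + ε * I)‖) (𝓝[>] 0) atTop} ∧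
    ν₁ ⟂ₘ ν₂ :=
  stripped_m_functions_singular_parts_mutually_singular_general a b ha μ₂ m₁ m₂ hm₂ hrel ν₁ ν₂
    hν₁supp hν₂supp
end
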